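/- (The paper's Corollary 3: optimal cache placement in single-antenna networks, water-filling form.) Let F_c be a finite nonempty set, let q_f > 0 for f ∈ F_c, let κ > 0 and C > 0 be reals, and set ζ_1 = 1 − 2∫_0^1 τu/(u^β+τ) du and ζ_2 = 2∫_0^∞ τu/(u^β+τ) du. Suppose u* > 0 satisfies ∑_{f∈F_c} [ (1/ζ_1)·( √(κ·q_f·ζ_2/u*) − ζ_2 ) ]_0^1 = C, where [x]_0^1 = max(min(x,1),0), and define t_f* = [ (1/ζ_1)·( √(κ·q_f·ζ_2/u*) − ζ_2 ) ]_0^1. Then t* maximizes ∑_{f∈F_c} κ·q_f·t_f/(ζ_1·t_f + ζ_2) over all t : F_c → [0,1] with ∑_{f∈F_c} t_f ≤ C. -/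

import Mathlib

/-!
Lagrangian weak duality with multiplier `u*`: for each file, `t_f*` maximizes
`κ q_f t / (ζ₁ t + ζ₂) - u* t` over `t ∈ [0, 1]`, being the clamped stationary point of this
concave function, and `∑ t_f* = C ≥ ∑ t_f`. Summing the pointwise inequalities gives the claim.
The constants `ζ₁`, `ζ₂` only need to be positive: `ζ₁ > 0` because the integrand lies
below `u` on `(0, 1]`, and `ζ₂ > 0` because it is positive and integrable for `β > 2`.
-/

open MeasureTheory Finset

/-- `ζ_1 = 1 − 2∫_0^1 τu/(u^β+τ) du`. -/
noncomputable def zeta1 (β τ : ℝ) : ℝ :=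
  1 - 2 * ∫ u in (0 : ℝ)..1, τ * u / (u ^ β + τ)

/-- `ζ_2 = 2∫_0^∞ τu/(u^β+τ) du`. -/
noncomputable def zeta2 (β τ : ℝ) : ℝ :=
  2 * ∫ u in Set.Ioi (0 : ℝ), τ * u / (u ^ β + τ)

/-- The clamp `[x]_0^1 = max(min(x,1),0)`. -/
noncomputable def clamp01 (x : ℝ) : ℝ := max (min x 1) 0

section Interference

variable {β τ : ℝ}

theorem continuousOn_interference_integrand (hβ : 0 < β) (hτ : 0 < τ) :
    ContinuousOn (fun u : ℝ => τ * u / (u ^ β + τ)) (Set.Ici 0) := by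
  intro u hu
  have hden : u ^ β + τ ≠ 0 := (add_pos_of_nonneg_of_pos (Real.rpow_nonneg hu β) hτ).ne'
  exact ((continuousAt_const.mul continuousAt_id).div
    ((Real.continuousAt_rpow_const u β (Or.inr hβ.le)).add continuousAt_const)
    hden).continuousWithinAt

theorem interference_integrand_pos (hτ : 0 < τ) {u : ℝ} (hu : 0 < u) :
    0 < τ * u / (u ^ β + τ) :=
  div_pos (mul_pos hτ hu) (add_pos_of_nonneg_of_pos (Real.rpow_nonneg hu.le β) hτ)

theorem interference_integrand_lt_self (hτ : 0 < τ) {u : ℝ} (hu : 0 < u) :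
    τ * u / (u ^ β + τ) < u := by
  rw [div_lt_iff₀ (add_pos_of_nonneg_of_pos (Real.rpow_nonneg hu.le β) hτ)]
  nlinarith [Real.rpow_pos_of_pos hu β]

theorem zeta1_pos (hβ : 0 < β) (hτ : 0 < τ) : 0 < zeta1 β τ := by
  have hlt : (∫ u in (0 : ℝ)..1, τ * u / (u ^ β + τ)) < ∫ u in (0 : ℝ)..1, u :=
    intervalIntegral.integral_lt_integral_of_continuousOn_of_le_of_exists_lt one_pos
      ((continuousOn_interference_integrand hβ hτ).mono Set.Icc_subset_Ici_self)
      continuousOn_id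
      (fun u hu => (interference_integrand_lt_self hτ hu.1).le)
      ⟨1, ⟨zero_le_one, le_rfl⟩, interference_integrand_lt_self hτ one_pos⟩
  rw [integral_id] at hlt
  unfold zeta1
  linarith

theorem integrableOn_interference_integrand (hβ : 2 < β) (hτ : 0 < τ) :
    IntegrableOn (fun u : ℝ => τ * u / (u ^ β + τ)) (Set.Ioi 0) := by
  have hcont := continuousOn_interference_integrand (β := β) (by linarith) hτ
  have hnear : IntegrableOn (fun u : ℝ => τ * u / (u ^ β + τ)) (Set.Ioc 0 1) :=
    (hcont.mono Set.Icc_subset_Ici_self).integrableOn_Icc.mono_set Set.Ioc_subset_Icc_self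
  -- on `(1, ∞)` the integrand is at most `τ u^{1-β}`, integrable since `1 - β < -1`
  have hfar : IntegrableOn (fun u : ℝ => τ * u / (u ^ β + τ)) (Set.Ioi 1) := by
    refine ((integrableOn_Ioi_rpow_of_lt (a := 1 - β) (by linarith) one_pos).const_mul τ).mono'
      ((hcont.mono fun u (hu : 1 < u) => (one_pos.trans hu).le).aestronglyMeasurable
        measurableSet_Ioi) ?_
    filter_upwards [ae_restrict_mem measurableSet_Ioi] with u (hu : 1 < u)
    have hu0 : 0 < u := one_pos.trans hu
    rw [Real.norm_of_nonneg (interference_integrand_pos hτ hu0).le, Real.rpow_sub hu0,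
      Real.rpow_one, ← mul_div_assoc]
    exact div_le_div_of_nonneg_left (by positivity) (Real.rpow_pos_of_pos hu0 β)
      (le_add_of_nonneg_right hτ.le)
  rw [← Set.Ioc_union_Ioi_eq_Ioi zero_le_one]
  exact hnear.union hfar

theorem zeta2_pos (hβ : 2 < β) (hτ : 0 < τ) : 0 < zeta2 β τ := by
  have hnonneg : 0 ≤ᵐ[volume.restrict (Set.Ioi 0)] fun u : ℝ => τ * u / (u ^ β + τ) := by
    filter_upwards [ae_restrict_mem measurableSet_Ioi] with u hu
    exact (interference_integrand_pos hτ hu).le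
  have hsupport : Set.Ioi (0 : ℝ) ⊆
      (Function.support fun u : ℝ => τ * u / (u ^ β + τ)) ∩ Set.Ioi 0 :=
    fun u hu => ⟨(interference_integrand_pos hτ hu).ne', hu⟩
  have hpos : 0 < ∫ u in Set.Ioi (0 : ℝ), τ * u / (u ^ β + τ) := by
    rw [setIntegral_pos_iff_support_of_nonneg_ae hnonneg
      (integrableOn_interference_integrand hβ hτ)]
    exact (measure_mono hsupport).trans_lt' (by simp [Real.volume_Ioi])
  unfold zeta2
  linarith

end Interference

theorem sub_clamp_mul_sq_sub_mul_clamp_nonpos {lo hi D S : ℝ} (hlo : 0 ≤ lo)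
    (hD : D ∈ Set.Icc lo hi) (hS : 0 ≤ S) :
    (D - max (min S hi) lo) * (S ^ 2 - D * max (min S hi) lo) ≤ 0 := by
  obtain ⟨hloD, hDhi⟩ := hD
  rcases le_total S lo with hSlo | hloS
  · rw [max_eq_right ((min_le_left S hi).trans hSlo)]
    refine mul_nonpos_of_nonneg_of_nonpos (by linarith) ?_
    nlinarith [mul_le_mul_of_nonneg_left hloD hlo]
  rcases le_total S hi with hShi | hhiS
  · rw [min_eq_left hShi, max_eq_left hloS]
    nlinarith [mul_nonneg hS (sq_nonneg (D - S))]
  · rw [min_eq_right hhiS, max_eq_left (hloD.trans hDhi)]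
    refine mul_nonpos_of_nonpos_of_nonneg (by linarith) ?_
    nlinarith [mul_le_mul_of_nonneg_left hDhi (hlo.trans (hloD.trans hDhi))]

theorem mul_clamp01_add {a b : ℝ} (ha : 0 < a) (x : ℝ) :
    a * clamp01 x + b = max (min (a * x + b) (a + b)) b := by
  rw [clamp01, mul_max_of_nonneg _ _ ha.le, mul_min_of_nonneg _ _ ha.le, ← max_add_add_right,
    ← min_add_add_right, mul_one, mul_zero, zero_add]

/-- `s` is the stationary point `(√(A z₂ / λ) - z₂) / z₁` of the concave map
`t ↦ A t / (z₁ t + z₂) - λ t`, clamped to `[0, 1]`. -/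
theorem lagrangian_le_at_clamp {z₁ z₂ lam A t s : ℝ} (hz₁ : 0 < z₁) (hz₂ : 0 < z₂)
    (hlam : 0 < lam) (hA : 0 ≤ A) (ht : t ∈ Set.Icc (0 : ℝ) 1)
    (hs : s = clamp01 ((1 / z₁) * (√(A * z₂ / lam) - z₂))) :
    A * t / (z₁ * t + z₂) - lam * t ≤ A * s / (z₁ * s + z₂) - lam * s := by
  set S := √(A * z₂ / lam)
  have hAS : A * z₂ = lam * S ^ 2 := by
    rw [Real.sq_sqrt (by positivity)]
    field_simp
  -- `z₁ s + z₂` is `S` clamped to the range `[z₂, z₁ + z₂]` of the denominator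
  have hDs : z₁ * s + z₂ = max (min S (z₁ + z₂)) z₂ := by
    rw [hs, mul_clamp01_add hz₁]
    field_simp
    ring_nf
  have hDt : z₁ * t + z₂ ∈ Set.Icc z₂ (z₁ + z₂) :=
    ⟨by nlinarith [ht.1], by nlinarith [ht.2]⟩
  have hsign := sub_clamp_mul_sq_sub_mul_clamp_nonpos hz₂.le hDt (S := S) (Real.sqrt_nonneg _)
  rw [← hDs] at hsign
  have hDt_pos : 0 < z₁ * t + z₂ := hz₂.trans_le hDt.1
  have hDs_pos : 0 < z₁ * s + z₂ := by rw [hDs]; exact hz₂.trans_le (le_max_right _ _)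
  set Dt := z₁ * t + z₂
  set Ds := z₁ * s + z₂
  have hgap : (A * t / Dt - lam * t) - (A * s / Ds - lam * s) =
      lam * ((Dt - Ds) * (S ^ 2 - Dt * Ds)) / (z₁ * (Dt * Ds)) := by
    field_simp
    linear_combination (t - s) * z₁ * hAS
  have := div_nonpos_of_nonpos_of_nonneg (mul_nonpos_of_nonneg_of_nonpos hlam.le hsign)
    (by positivity : 0 ≤ z₁ * (Dt * Ds))
  linarith

theorem sum_le_sum_of_lagrangian_le {ι : Type*} (s : Finset ι) (φ : ι → ℝ → ℝ) {lam : ℝ}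
    (hlam : 0 ≤ lam) {t x : ι → ℝ} (hsum : ∑ i ∈ s, t i ≤ ∑ i ∈ s, x i)
    (hle : ∀ i ∈ s, φ i (t i) - lam * t i ≤ φ i (x i) - lam * x i) :
    ∑ i ∈ s, φ i (t i) ≤ ∑ i ∈ s, φ i (x i) := by
  have := Finset.sum_le_sum hle
  rw [Finset.sum_sub_distrib, Finset.sum_sub_distrib, ← Finset.mul_sum, ← Finset.mul_sum] at this
  nlinarith [mul_le_mul_of_nonneg_left hsum hlam]

theorem optimal_cache_placement_single_antenna_general
    {ι : Type*} (Fc : Finset ι)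
    (q : ι → ℝ) (hq : ∀ f ∈ Fc, 0 < q f)
    (κ C : ℝ) (hκ : 0 < κ)
    (β τ : ℝ) (hβ : 2 < β) (hτ : 0 < τ)
    (ustar : ℝ) (hustar : 0 < ustar)
    (hsum : ∑ f ∈ Fc,
      clamp01 ((1 / zeta1 β τ) * (Real.sqrt (κ * q f * zeta2 β τ / ustar) - zeta2 β τ)) = C)
    (tstar : ι → ℝ)
    (htstar : ∀ f,
      tstar f = clamp01 ((1 / zeta1 β τ) * (Real.sqrt (κ * q f * zeta2 β τ / ustar) - zeta2 β τ))) :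
    ∀ t : ι → ℝ, (∀ f ∈ Fc, t f ∈ Set.Icc (0 : ℝ) 1) → ∑ f ∈ Fc, t f ≤ C →
      ∑ f ∈ Fc, κ * q f * t f / (zeta1 β τ * t f + zeta2 β τ) ≤
        ∑ f ∈ Fc, κ * q f * tstar f / (zeta1 β τ * tstar f + zeta2 β τ) := by
  intro t ht htC
  have hstar_sum : ∑ f ∈ Fc, tstar f = C := by simpa only [← htstar] using hsum
  refine sum_le_sum_of_lagrangian_le Fc (fun f x => κ * q f * x / (zeta1 β τ * x + zeta2 β τ))
    hustar.le (hstar_sum ▸ htC) fun f hf => ?_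
  exact lagrangian_le_at_clamp (zeta1_pos (by linarith) hτ) (zeta2_pos hβ hτ) hustar
    (mul_pos hκ (hq f hf)).le (ht f hf) (htstar f)

/-- **The paper's Corollary 3** (optimal cache placement in single-antenna networks,
water-filling form): if `u* > 0` satisfies
`∑_{f∈F_c} [ (1/ζ_1)·(√(κ·q_f·ζ_2/u*) − ζ_2) ]_0^1 = C` and
`t_f* = [ (1/ζ_1)·(√(κ·q_f·ζ_2/u*) − ζ_2) ]_0^1`, then `t*` maximizes
`∑_{f∈F_c} κ·q_f·t_f/(ζ_1·t_f + ζ_2)` over all `t : F_c → [0,1]` with `∑_{f∈F_c} t_f ≤ C`. -/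
theorem optimal_cache_placement_single_antenna
    {ι : Type*} [DecidableEq ι] (Fc : Finset ι) (hFc : Fc.Nonempty)
    (q : ι → ℝ) (hq : ∀ f ∈ Fc, 0 < q f)
    (κ C : ℝ) (hκ : 0 < κ) (hC : 0 < C)
    (β τ : ℝ) (hβ : 2 < β) (hτ : 0 < τ)
    (ustar : ℝ) (hustar : 0 < ustar)
    (hsum : ∑ f ∈ Fc,
      clamp01 ((1 / zeta1 β τ) * (Real.sqrt (κ * q f * zeta2 β τ / ustar) - zeta2 β τ)) = C)
    (tstar : ι → ℝ)
    (htstar : ∀ f,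
      tstar f = clamp01 ((1 / zeta1 β τ) * (Real.sqrt (κ * q f * zeta2 β τ / ustar) - zeta2 β τ))) :
    ∀ t : ι → ℝ, (∀ f ∈ Fc, t f ∈ Set.Icc (0 : ℝ) 1) → ∑ f ∈ Fc, t f ≤ C →
      ∑ f ∈ Fc, κ * q f * t f / (zeta1 β τ * t f + zeta2 β τ) ≤
        ∑ f ∈ Fc, κ * q f * tstar f / (zeta1 β τ * tstar f + zeta2 β τ) :=
  optimal_cache_placement_single_antenna_general Fc q hq κ C hκ β τ hβ hτ ustar hustar hsum tstar
    htstar
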